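/- arXiv:1105.3249 — 2 statements merged into one kernel-verified Lean document; each statement's English description precedes it below -/
import Mathlib

section
/- Let 𝔏 be a left-resolving, predecessor-separated λ-synchronizing λ-graph system presenting a subshift Λ. Then the union over vertices v ∈ V_l of the launching sets S_v(Λ) equals the set S_l(Λ) of l-synchronizing words, the union is disjoint, and the sets S_v(Λ), v ∈ V_l, are exactly the l-past equivalence classes of S_l(Λ). -/
open List

variable {A : Type*}

/-- A subshift: a closed, shift-invariant subset of `A^ℤ` (with `A` discrete). -/
def IsSubshift [TopologicalSpace A] (Λ : Set (ℤ → A)) : Prop :=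
  IsClosed Λ ∧ (∀ x ∈ Λ, (fun i => x (i + 1)) ∈ Λ) ∧ (∀ x ∈ Λ, (fun i => x (i - 1)) ∈ Λ)

/-- `w` is an admissible word of `Λ`, i.e. `w ∈ B_*(Λ)`. -/
def Adm (Λ : Set (ℤ → A)) (w : List A) : Prop :=
  ∃ x ∈ Λ, ∃ n : ℤ, ∀ i : Fin w.length, x (n + (i : ℕ)) = w.get i

/-- `Γ_l^-(μ)`: the set of admissible words `ν` of length `l` with `νμ` admissible. -/
def Gamma (Λ : Set (ℤ → A)) (l : ℕ) (μ : List A) : Set (List A) :=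
  {ν | ν.length = l ∧ Adm Λ ν ∧ Adm Λ (ν ++ μ)}

/-- `μ` is an `l`-synchronizing word of `Λ`: `Γ_l^-(μ) = Γ_l^-(μω)` for all
`ω ∈ Γ_*^+(μ)`.  Membership in `S_l(Λ)`. -/
def LSync (Λ : Set (ℤ → A)) (l : ℕ) (μ : List A) : Prop :=
  Adm Λ μ ∧ ∀ ω : List A, Adm Λ (μ ++ ω) → Gamma Λ l μ = Gamma Λ l (μ ++ ω)

/-- `ω` is an intrinsically synchronizing word of `Λ`. -/
def IntrSync (Λ : Set (ℤ → A)) (ω : List A) : Prop :=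
  Adm Λ ω ∧ ∀ μ ν : List A, Adm Λ μ → Adm Λ ν → Adm Λ (μ ++ ω) → Adm Λ (ω ++ ν) →
    Adm Λ (μ ++ ω ++ ν)

/-- Irreducibility of the subshift `Λ`. -/
def IrredShift (Λ : Set (ℤ → A)) : Prop :=
  ∀ μ ν : List A, Adm Λ μ → Adm Λ ν → ∃ ξ : List A, Adm Λ (μ ++ ξ ++ ν)

/-- `Λ` is `λ`-synchronizing: it is irreducible and for every `η ∈ B_l(Λ)` and `k ≥ l`
there is `ν ∈ S_k(Λ)` with `ην ∈ S_{k-l}(Λ)`. -/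
def LambdaSync (Λ : Set (ℤ → A)) : Prop :=
  IrredShift Λ ∧ ∀ (η : List A) (k : ℕ), Adm Λ η → η.length ≤ k →
    ∃ ν : List A, LSync Λ k ν ∧ LSync Λ (k - η.length) (η ++ ν)

/-- A `λ`-graph system over the alphabet `A`: a labeled Bratteli diagram with
finite vertex sets `V l` and edge sets `E l` (edges from level `l` to level `l+1`),
a labeling, and surjective `ι`-maps, satisfying the local property (stated as a
label-wise counting identity, i.e. a label-preserving bijection), such that every
vertex has a successor and every vertex at level `l+1` has a predecessor. -/
structure LGS (A : Type*) where
  V : ℕ → Type*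
  E : ℕ → Type*
  finV : ∀ l, Finite (V l)
  finE : ∀ l, Finite (E l)
  src : ∀ l, E l → V l
  tgt : ∀ l, E l → V (l + 1)
  lab : ∀ l, E l → A
  iota : ∀ l, V (l + 1) → V l
  iota_surj : ∀ l, Function.Surjective (iota l)
  succ : ∀ (l : ℕ) (v : V l), ∃ e : E l, src l e = v
  pred : ∀ (l : ℕ) (v : V (l + 1)), ∃ e : E l, tgt l e = v
  local_property : ∀ (l : ℕ) (u : V l) (v : V (l + 2)) (α : A),
    Nat.card {e : E (l + 1) //
        tgt (l + 1) e = v ∧ iota l (src (l + 1) e) = u ∧ lab (l + 1) e = α}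
      = Nat.card {e : E l //
        src l e = u ∧ tgt l e = iota (l + 1) v ∧ lab l e = α}

namespace LGS

variable {A : Type*}

/-- There is a labeled path in `G` starting at `v : V l`, labeled `w`, ending at `u : V l'`. -/
def PathW (G : LGS A) : ∀ (l : ℕ), G.V l → List A → ∀ (l' : ℕ), G.V l' → Prop
  | l, v, [], l', u => ∃ h : l = l', h ▸ v = u
  | l, v, a :: w, l', u =>
      ∃ e : G.E l, G.src l e = v ∧ G.lab l e = a ∧ G.PathW (l + 1) (G.tgt l e) w l' u

/-- `G` presents the subshift `Λ`: the admissible words of `Λ` are exactly the labels of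
finite labeled paths appearing somewhere in `G`. -/
def Presents (G : LGS A) (Λ : Set (ℤ → A)) : Prop :=
  ∀ w : List A, Adm Λ w ↔ ∃ (l : ℕ) (v : G.V l) (l' : ℕ) (u : G.V l'), G.PathW l v w l' u

/-- Iterated `ι`-map `ι^n : V (l+n) → V l`. -/
def iotaN (G : LGS A) : ∀ (l n : ℕ), G.V (l + n) → G.V l
  | _, 0, v => v
  | l, n + 1, v => G.iotaN l n (G.iota (l + n) v)

/-- `G` is left-resolving: edges carrying the same label have distinct terminal vertices. -/
def LeftResolving (G : LGS A) : Prop :=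
  ∀ (l : ℕ) (e f : G.E l), G.lab l e = G.lab l f → G.tgt l e = G.tgt l f → e = f

/-- The predecessor set `Γ_l^-(v)` of a vertex `v ∈ V l`: the words of length `l`
labeling paths from level `0` to `v`. -/
def PredSet (G : LGS A) (l : ℕ) (v : G.V l) : Set (List A) :=
  {w | w.length = l ∧ ∃ v0 : G.V 0, G.PathW 0 v0 w l v}

/-- `G` is predecessor-separated. -/
def PredSeparated (G : LGS A) : Prop :=
  ∀ (l : ℕ) (u v : G.V l), G.PredSet l u = G.PredSet l v → u = v

/-- The word `w` leaves the vertex `v`. -/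
def Leaves (G : LGS A) (l : ℕ) (v : G.V l) (w : List A) : Prop :=
  ∃ (l' : ℕ) (u : G.V l'), G.PathW l v w l' u

/-- The vertex `v ∈ V l` launches the word `w`: `w` leaves `v` and no other vertex of `V l`. -/
def Launches (G : LGS A) (l : ℕ) (v : G.V l) (w : List A) : Prop :=
  G.Leaves l v w ∧ ∀ v' : G.V l, G.Leaves l v' w → v' = v

/-- `G` is a `λ`-synchronizing `λ`-graph system: every vertex launches some word. -/
def LambdaSyncSys (G : LGS A) : Prop :=
  ∀ (l : ℕ) (v : G.V l), ∃ w : List A, G.Launches l v w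

/-- `G` is `ι`-irreducible. -/
def IotaIrred (G : LGS A) : Prop :=
  ∀ (l : ℕ) (v u : G.V l) (w : List A) (l' : ℕ) (t : G.V l'),
    G.PathW l u w l' t →
    ∃ (n : ℕ) (ξ : List A) (u' : G.V (l + n)) (t' : G.V (l' + n)),
      G.PathW l v ξ (l + n) u' ∧ G.iotaN l n u' = u ∧
      G.PathW (l + n) u' w (l' + n) t' ∧ G.iotaN l' n t' = t

end LGS

/-! A word launched by `v ∈ V_l` has the predecessors of `v` as its `l`-past, and so does every
admissible extension of it, which is still launched by `v`; hence it is `l`-synchronizing.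
Conversely, if `w` is `l`-synchronizing and leaves `v`, extend it along a path from `v` by a word
launched at the end of that path: by left-resolvingness `v` launches the extension, so
`Γ_l^-(w) = Γ_l^-(v)` for every such `v`, and predecessor separation makes `v` unique.
The local property lets admissible words leave vertices on every level, so that `Γ_l^-(w)` can be
read off from the vertices of `V_l` that `w` leaves. -/

theorem nonempty_of_nat_card_eq {α β : Type*} [Finite α] [Nonempty α]
    (h : Nat.card α = Nat.card β) : Nonempty β :=
  (Nat.card_pos_iff.1 (h ▸ Nat.card_pos)).1

namespace LGS

variable {G : LGS A} {Λ : Set (ℤ → A)}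

theorem PathW.length_eq {w : List A} {l l' : ℕ} {v : G.V l} {u : G.V l'}
    (p : G.PathW l v w l' u) : l' = l + w.length := by
  induction w generalizing l with
  | nil => obtain ⟨rfl, -⟩ := p; rfl
  | cons a w ih =>
    obtain ⟨e, -, -, p⟩ := p
    rw [ih p, List.length_cons]
    omega

theorem PathW.append {ν w : List A} {l l' l'' : ℕ} {v : G.V l} {t : G.V l'} {u : G.V l''}
    (p : G.PathW l v ν l' t) (q : G.PathW l' t w l'' u) : G.PathW l v (ν ++ w) l'' u := by
  induction ν generalizing l with
  | nil => obtain ⟨rfl, rfl⟩ := p; exact q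
  | cons a ν ih =>
    obtain ⟨e, he, hlab, p⟩ := p
    exact ⟨e, he, hlab, ih p⟩

theorem PathW.split {ν w : List A} {l l'' : ℕ} {v : G.V l} {u : G.V l''}
    (p : G.PathW l v (ν ++ w) l'' u) :
    ∃ (l' : ℕ) (t : G.V l'), G.PathW l v ν l' t ∧ G.PathW l' t w l'' u := by
  induction ν generalizing l with
  | nil => exact ⟨l, v, ⟨rfl, rfl⟩, p⟩
  | cons a ν ih =>
    obtain ⟨e, he, hlab, p⟩ := p
    obtain ⟨l', t, p₁, p₂⟩ := ih p
    exact ⟨l', t, ⟨e, he, hlab, p₁⟩, p₂⟩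

theorem Leaves.of_append {l : ℕ} {v : G.V l} {w ω : List A} (h : G.Leaves l v (w ++ ω)) :
    G.Leaves l v w := by
  obtain ⟨_, _, p⟩ := h
  obtain ⟨l', t, p₁, -⟩ := p.split
  exact ⟨l', t, p₁⟩

theorem exists_edge_iota {l : ℕ} (e : G.E (l + 1)) :
    ∃ f : G.E l, G.src l f = G.iota l (G.src (l + 1) e) ∧
      G.tgt l f = G.iota (l + 1) (G.tgt (l + 1) e) ∧ G.lab l f = G.lab (l + 1) e := by
  have := G.finE (l + 1)
  have : Nonempty {f : G.E (l + 1) // G.tgt (l + 1) f = G.tgt (l + 1) e ∧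
      G.iota l (G.src (l + 1) f) = G.iota l (G.src (l + 1) e) ∧
      G.lab (l + 1) f = G.lab (l + 1) e} := ⟨⟨e, rfl, rfl, rfl⟩⟩
  obtain ⟨f, hf⟩ := nonempty_of_nat_card_eq
    (G.local_property l (G.iota l (G.src (l + 1) e)) (G.tgt (l + 1) e) (G.lab (l + 1) e))
  exact ⟨f, hf⟩

theorem exists_edge_of_tgt_eq_iota {l : ℕ} (e : G.E l) {v : G.V (l + 2)}
    (h : G.tgt l e = G.iota (l + 1) v) :
    ∃ f : G.E (l + 1), G.tgt (l + 1) f = v ∧ G.iota l (G.src (l + 1) f) = G.src l e ∧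
      G.lab (l + 1) f = G.lab l e := by
  have := G.finE l
  have : Nonempty {f : G.E l // G.src l f = G.src l e ∧ G.tgt l f = G.iota (l + 1) v ∧
      G.lab l f = G.lab l e} := ⟨⟨e, rfl, h, rfl⟩⟩
  obtain ⟨f, hf⟩ := nonempty_of_nat_card_eq (G.local_property l (G.src l e) v (G.lab l e)).symm
  exact ⟨f, hf⟩

theorem Leaves.iota {l : ℕ} {v : G.V (l + 1)} {w : List A} (h : G.Leaves (l + 1) v w) :
    G.Leaves l (G.iota l v) w := by
  induction w generalizing l with
  | nil => exact ⟨l, _, rfl, rfl⟩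
  | cons a w ih =>
    obtain ⟨l', u, e, rfl, rfl, p⟩ := h
    obtain ⟨l'', u', p'⟩ := ih ⟨l', u, p⟩
    obtain ⟨f, hsrc, htgt, hlab⟩ := exists_edge_iota e
    exact ⟨l'', u', f, hsrc, hlab, htgt ▸ p'⟩

theorem Leaves.exists_iota_eq {l : ℕ} {u : G.V l} {w : List A} (h : G.Leaves l u w) :
    ∃ u' : G.V (l + 1), G.iota l u' = u ∧ G.Leaves (l + 1) u' w := by
  induction w generalizing l with
  | nil =>
    obtain ⟨u', hu'⟩ := G.iota_surj l u
    exact ⟨u', hu', l + 1, u', rfl, rfl⟩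
  | cons a w ih =>
    obtain ⟨l', t, e, rfl, rfl, p⟩ := h
    obtain ⟨s, hs, l'', t', p'⟩ := ih ⟨l', t, p⟩
    obtain ⟨f, htgt, hsrc, hlab⟩ := exists_edge_of_tgt_eq_iota e hs.symm
    exact ⟨G.src (l + 1) f, hsrc, l'', t', f, rfl, hlab, htgt ▸ p'⟩

theorem Leaves.exists_leaves {l₀ : ℕ} {v₀ : G.V l₀} {w : List A} (h : G.Leaves l₀ v₀ w)
    (l : ℕ) : ∃ v : G.V l, G.Leaves l v w := by
  induction l with
  | zero =>
    induction l₀ with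
    | zero => exact ⟨v₀, h⟩
    | succ n ih => exact ih h.iota
  | succ n ih =>
    obtain ⟨v, hv⟩ := ih
    obtain ⟨u, -, hu⟩ := hv.exists_iota_eq
    exact ⟨u, hu⟩

theorem Presents.adm_iff (hpres : G.Presents Λ) (l : ℕ) {w : List A} :
    Adm Λ w ↔ ∃ v : G.V l, G.Leaves l v w := by
  refine ⟨fun h => ?_, fun ⟨v, l', u, p⟩ => (hpres w).2 ⟨l, v, l', u, p⟩⟩
  obtain ⟨l₀, v₀, l', u, p⟩ := (hpres w).1 h
  exact Leaves.exists_leaves ⟨l', u, p⟩ l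

theorem Presents.mem_gamma_iff (hpres : G.Presents Λ) {l : ℕ} {μ ν : List A} :
    ν ∈ Gamma Λ l μ ↔ ∃ v : G.V l, ν ∈ G.PredSet l v ∧ G.Leaves l v μ := by
  constructor
  · rintro ⟨rfl, -, hadm⟩
    obtain ⟨v₀, l'', u, p⟩ := (hpres.adm_iff 0).1 hadm
    obtain ⟨l', t, p₁, p₂⟩ := p.split
    obtain rfl : l' = ν.length := by simpa using p₁.length_eq
    exact ⟨t, ⟨rfl, v₀, p₁⟩, l'', u, p₂⟩
  · rintro ⟨v, ⟨hlen, v₀, p⟩, l', u, q⟩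
    exact ⟨hlen, (hpres ν).2 ⟨0, v₀, l, v, p⟩,
      (hpres _).2 ⟨0, v₀, l', u, p.append q⟩⟩

theorem Presents.gamma_eq_predSet (hpres : G.Presents Λ) {l : ℕ} {v : G.V l} {w : List A}
    (h : G.Launches l v w) : Gamma Λ l w = G.PredSet l v := by
  ext ν
  rw [hpres.mem_gamma_iff]
  refine ⟨fun ⟨v', hν, hv'⟩ => h.2 v' hv' ▸ hν, fun hν => ⟨v, hν, h.1⟩⟩

theorem Launches.append {l : ℕ} {v : G.V l} {w ω : List A} (h : G.Launches l v w)
    (hω : G.Leaves l v (w ++ ω)) : G.Launches l v (w ++ ω) :=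
  ⟨hω, fun v' hv' => h.2 v' hv'.of_append⟩

theorem Presents.lsync_of_launches (hpres : G.Presents Λ) {l : ℕ} {v : G.V l} {w : List A}
    (h : G.Launches l v w) : LSync Λ l w := by
  refine ⟨(hpres.adm_iff l).2 ⟨v, h.1⟩, fun ω hω => ?_⟩
  obtain ⟨v', hv'⟩ := (hpres.adm_iff l).1 hω
  obtain rfl := h.2 v' hv'.of_append
  rw [hpres.gamma_eq_predSet h, hpres.gamma_eq_predSet (h.append hv')]

theorem LeftResolving.src_eq_of_pathW (hlr : G.LeftResolving) {w : List A} {l l' : ℕ}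
    {v v' : G.V l} {t : G.V l'} (p : G.PathW l v w l' t) (p' : G.PathW l v' w l' t) :
    v = v' := by
  induction w generalizing l with
  | nil => obtain ⟨rfl, rfl⟩ := p; obtain ⟨-, rfl⟩ := p'; rfl
  | cons a w ih =>
    obtain ⟨e, rfl, rfl, p⟩ := p
    obtain ⟨f, rfl, hlab, p'⟩ := p'
    rw [hlr l e f hlab.symm (ih p p')]

theorem LeftResolving.launches_append (hlr : G.LeftResolving) {w ν : List A} {l l' : ℕ}
    {v : G.V l} {t : G.V l'} (p : G.PathW l v w l' t) (ht : G.Launches l' t ν) :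
    G.Launches l v (w ++ ν) := by
  obtain ⟨⟨l'', u, q⟩, huniq⟩ := ht
  refine ⟨⟨l'', u, p.append q⟩, fun v' ⟨_, _, p'⟩ => ?_⟩
  obtain ⟨l₂, t', p₁, p₂⟩ := p'.split
  obtain rfl := p.length_eq
  obtain rfl := p₁.length_eq
  obtain rfl := huniq t' ⟨_, _, p₂⟩
  exact hlr.src_eq_of_pathW p₁ p

theorem gamma_eq_predSet_of_lsync (hpres : G.Presents Λ) (hlr : G.LeftResolving)
    (hsync : G.LambdaSyncSys) {l : ℕ} {v : G.V l} {w : List A} (hw : LSync Λ l w)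
    (hv : G.Leaves l v w) : Gamma Λ l w = G.PredSet l v := by
  obtain ⟨l', t, p⟩ := hv
  obtain ⟨ν, hν⟩ := hsync l' t
  have hlaunch := hlr.launches_append p hν
  rw [hw.2 ν ((hpres.adm_iff l).2 ⟨v, hlaunch.1⟩), hpres.gamma_eq_predSet hlaunch]

theorem exists_launches_of_lsync (hpres : G.Presents Λ) (hlr : G.LeftResolving)
    (hps : G.PredSeparated) (hsync : G.LambdaSyncSys) {l : ℕ} {w : List A}
    (hw : LSync Λ l w) : ∃ v : G.V l, G.Launches l v w := by
  obtain ⟨v, hv⟩ := (hpres.adm_iff l).1 hw.1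
  refine ⟨v, hv, fun v' hv' => hps l v' v ?_⟩
  rw [← gamma_eq_predSet_of_lsync hpres hlr hsync hw hv,
    ← gamma_eq_predSet_of_lsync hpres hlr hsync hw hv']

end LGS

theorem launching_sets_are_past_classes_general
    (Λ : Set (ℤ → A)) (G : LGS A)
    (hpres : G.Presents Λ) (hlr : G.LeftResolving) (hps : G.PredSeparated)
    (hsync : G.LambdaSyncSys) (l : ℕ) :
    (∀ w : List A, LSync Λ l w ↔ ∃ v : G.V l, G.Launches l v w) ∧
    (∀ (v v' : G.V l) (w : List A), G.Launches l v w → G.Launches l v' w → v = v') ∧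
    (∀ w w' : List A, LSync Λ l w → LSync Λ l w' →
      (Gamma Λ l w = Gamma Λ l w' ↔ ∃ v : G.V l, G.Launches l v w ∧ G.Launches l v w')) := by
  refine ⟨fun w => ⟨LGS.exists_launches_of_lsync hpres hlr hps hsync,
      fun ⟨v, hv⟩ => hpres.lsync_of_launches hv⟩,
    fun v v' w h h' => h'.2 v h.1, fun w w' hw hw' => ⟨fun h => ?_, ?_⟩⟩
  · obtain ⟨v, hv⟩ := LGS.exists_launches_of_lsync hpres hlr hps hsync hw
    obtain ⟨v', hv'⟩ := LGS.exists_launches_of_lsync hpres hlr hps hsync hw'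
    obtain rfl := hps l v v' <| by
      rw [← hpres.gamma_eq_predSet hv, ← hpres.gamma_eq_predSet hv', h]
    exact ⟨v, hv, hv'⟩
  · rintro ⟨v, hv, hv'⟩
    rw [hpres.gamma_eq_predSet hv, hpres.gamma_eq_predSet hv']

/-- for a left-resolving, predecessor-separated, `λ`-synchronizing
`λ`-graph system `G` presenting `Λ`:
(i) the words launched by vertices of `V l` are exactly the `l`-synchronizing words;
(ii) the launching sets of distinct vertices are disjoint;
(iii) two `l`-synchronizing words are `l`-past equivalent iff they are launched by
the same vertex; i.e. the launching sets are exactly the `l`-past equivalence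
classes of `S_l(Λ)`. -/
theorem launching_sets_are_past_classes [TopologicalSpace A] [DiscreteTopology A] [Finite A]
    (Λ : Set (ℤ → A)) (hΛ : IsSubshift Λ) (G : LGS A)
    (hpres : G.Presents Λ) (hlr : G.LeftResolving) (hps : G.PredSeparated)
    (hsync : G.LambdaSyncSys) (l : ℕ) :
    (∀ w : List A, LSync Λ l w ↔ ∃ v : G.V l, G.Launches l v w) ∧
    (∀ (v v' : G.V l) (w : List A), G.Launches l v w → G.Launches l v' w → v = v') ∧
    (∀ w w' : List A, LSync Λ l w → LSync Λ l w' →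
      (Gamma Λ l w = Gamma Λ l w' ↔ ∃ v : G.V l, G.Launches l v w ∧ G.Launches l v w')) :=
  launching_sets_are_past_classes_general Λ G hpres hlr hps hsync l
end

section
/- Let Λ̃ be the expansion of a subshift Λ replacing the symbol 1 by 01. If ν is a 2l-synchronizing word of Λ̃ which neither begins with 1 nor ends with 0, then the word η^B(ν) obtained by replacing each occurrence of 01 in ν by 1 is an l-synchronizing word of Λ. -/
/-! Every factor of a `ξ^B`-image obeys the local rule "a letter is `0` iff the next one is `1`",
so a word `ν` of `Λ̃` that neither begins with `1` nor ends with `0` equals `ξ^B(η^B ν)`.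
If `κ` of length `l` extends `μ = η^B ν` to the left in `Λ`, then `ξ^B κ` has length at most `2l`;
padded on the left to length `2l` it lies in `Γ⁻_{2l}(ν) = Γ⁻_{2l}(ν ξ^B ω) = Γ⁻_{2l}(ξ^B(μ ω))`,
and deleting the `0`s again shows that `κ μ ω` is admissible. -/

open List

variable {A : Type*}

/-- `Γ_l^-` of a word with respect to a language `L ⊆ B^*`. -/
def GammaL {B : Type*} (L : Set (List B)) (l : ℕ) (μ : List B) : Set (List B) :=
  {ν | ν.length = l ∧ ν ∈ L ∧ ν ++ μ ∈ L}

/-- `μ` is an `l`-synchronizing word with respect to the language `L`. -/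
def LSyncL {B : Type*} (L : Set (List B)) (l : ℕ) (μ : List B) : Prop :=
  μ ∈ L ∧ ∀ ω : List B, μ ++ ω ∈ L → GammaL L l μ = GammaL L l (μ ++ ω)

/-- `ξ^B`: replace every occurrence of the symbol `a1` (playing the role of `1`) by the
word `0 1`, where the new symbol `0` is `none` and each old symbol `a` is `some a`. -/
def xiB [DecidableEq A] (a1 : A) : List A → List (Option A)
  | [] => []
  | a :: w => (if a = a1 then [none, some a1] else [some a]) ++ xiB a1 w

/-- The language `B_*(Λ̃)` of the expansion `Λ̃` of `Λ` (replacing the symbol `1 = a1` by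
`01`): the factors of the `ξ^B`-images of admissible words of `Λ`. -/
def tildeLang [DecidableEq A] (Λ : Set (ℤ → A)) (a1 : A) : Set (List (Option A)) :=
  {u | ∃ w : List A, Adm Λ w ∧ u <:+: xiB a1 w}

section Adm

variable {Λ : Set (ℤ → A)}

lemma Adm.infix {u v : List A} (hv : Adm Λ v) (huv : u <:+: v) : Adm Λ u := by
  obtain ⟨s, t, rfl⟩ := huv
  obtain ⟨x, hx, n, hn⟩ := hv
  refine ⟨x, hx, n + s.length, fun i => ?_⟩
  have hi : s.length + (i : ℕ) < (s ++ u ++ t).length := by simp; omega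
  have := hn ⟨s.length + i, hi⟩
  simp only [List.get_eq_getElem] at this ⊢
  rw [show n + (s.length : ℤ) + ((i : ℕ) : ℤ) = n + ((s.length + i : ℕ) : ℤ) by push_cast; ring,
    this, List.getElem_append_left (by simp), List.getElem_append_right (by omega)]
  simp

lemma Adm.exists_append_left {v : List A} (hv : Adm Λ v) (m : ℕ) :
    ∃ p : List A, p.length = m ∧ Adm Λ (p ++ v) := by
  obtain ⟨x, hx, n, hn⟩ := hv
  refine ⟨List.ofFn fun j : Fin m => x (n - m + j), by simp, x, hx, n - m, fun i => ?_⟩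
  have hi := i.isLt
  simp only [List.length_append, List.length_ofFn] at hi
  simp only [List.get_eq_getElem]
  by_cases him : (i : ℕ) < m
  · rw [List.getElem_append_left (by simpa using him)]
    simp
  · rw [List.getElem_append_right (by simpa using him)]
    have := hn ⟨i - m, by omega⟩
    simp only [List.get_eq_getElem] at this
    simp only [List.length_ofFn, ← this]
    congr 1
    push_cast [Nat.cast_sub (not_lt.mp him)]
    ring

lemma Gamma_append_subset (l : ℕ) (μ ω : List A) : Gamma Λ l (μ ++ ω) ⊆ Gamma Λ l μ :=
  fun _ ⟨hlen, hκ, hκμω⟩ => ⟨hlen, hκ, hκμω.infix ⟨[], ω, by simp⟩⟩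

end Adm

section Expansion

variable [DecidableEq A] (a1 : A)

@[simp]
lemma xiB_nil : xiB a1 [] = [] := rfl

@[simp]
lemma xiB_append (u v : List A) : xiB a1 (u ++ v) = xiB a1 u ++ xiB a1 v := by
  induction u with
  | nil => rfl
  | cons a u ih => simp [xiB, ih]

@[simp]
lemma filterMap_id_xiB (w : List A) : (xiB a1 w).filterMap id = w := by
  induction w with
  | nil => rfl
  | cons a w ih => by_cases h : a = a1 <;> simp_all [xiB]

lemma length_le_length_xiB (w : List A) : w.length ≤ (xiB a1 w).length := by
  induction w with
  | nil => simp
  | cons a w ih => by_cases h : a = a1 <;> simp [xiB, h] <;> omega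

lemma length_xiB_le (w : List A) : (xiB a1 w).length ≤ 2 * w.length := by
  induction w with
  | nil => simp
  | cons a w ih => by_cases h : a = a1 <;> simp [xiB, h] <;> omega

lemma head?_xiB_ne (w : List A) : (xiB a1 w).head? ≠ some (some a1) := by
  cases w with
  | nil => simp
  | cons a w => by_cases h : a = a1 <;> simp [xiB, h]

/-- Adjacent letters `x y` of `Λ̃`: `x` is `0` iff `y` is `1`. -/
def ExpansionRel (x y : Option A) : Prop := x = none ↔ y = some a1

lemma isChain_xiB (w : List A) : List.IsChain (ExpansionRel a1) (xiB a1 w) := by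
  induction w with
  | nil => exact List.isChain_nil
  | cons a w ih =>
    refine List.IsChain.append ?_ ih fun x hx y hy => ?_
    · split_ifs <;> simp [ExpansionRel]
    · have hy' : y ≠ some a1 := fun h => head?_xiB_ne a1 w (h ▸ hy)
      split_ifs at hx <;> simp at hx <;> subst hx <;> simp [ExpansionRel, hy']

-- The second conjunct lets the induction pass a leading `0 1`.
lemma xiB_filterMap_id_of_isChain :
    ∀ u : List (Option A), List.IsChain (ExpansionRel a1) u → u.getLast? ≠ some none →
      (u.head? ≠ some (some a1) → xiB a1 (u.filterMap id) = u) ∧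
      (u.head? = some (some a1) → xiB a1 (u.filterMap id) = none :: u)
  | [], _, _ => by simp
  | x :: u, hc, hlast => by
    have hlast' : u.getLast? ≠ some none := by cases u <;> simp_all [List.getLast?_cons_cons]
    have ih := xiB_filterMap_id_of_isChain u hc.tail hlast'
    have hhead : ∀ y ∈ u.head?, ExpansionRel a1 x y := (List.isChain_cons.mp hc).1
    cases x with
    | none =>
      cases u with
      | nil => simp at hlast
      | cons y u =>
        have hy : y = some a1 := (hhead y rfl).mp rfl
        subst hy
        simpa using ih.2 rfl
    | some a =>
      have hu : u.head? ≠ some (some a1) := fun h => by simpa [ExpansionRel] using hhead _ h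
      by_cases ha : a = a1 <;> simp [xiB, ha] <;> exact ih.1 hu

end Expansion

section TildeLang

variable [DecidableEq A] {Λ : Set (ℤ → A)} {a1 : A}

lemma xiB_mem_tildeLang {w : List A} (hw : Adm Λ w) : xiB a1 w ∈ tildeLang Λ a1 :=
  ⟨w, hw, List.infix_refl _⟩

lemma mem_tildeLang_of_infix {u v : List (Option A)} (hv : v ∈ tildeLang Λ a1) (huv : u <:+: v) :
    u ∈ tildeLang Λ a1 :=
  let ⟨w, hw, hvw⟩ := hv
  ⟨w, hw, huv.trans hvw⟩

lemma adm_filterMap_id_of_mem_tildeLang {u : List (Option A)} (hu : u ∈ tildeLang Λ a1) :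
    Adm Λ (u.filterMap id) := by
  obtain ⟨w, hw, s, t, hw'⟩ := hu
  exact hw.infix ⟨s.filterMap id, t.filterMap id, by
    rw [← List.filterMap_append, ← List.filterMap_append, hw', filterMap_id_xiB]⟩

lemma exists_append_left_mem_tildeLang {u : List (Option A)} (hu : u ∈ tildeLang Λ a1) (m : ℕ) :
    ∃ p : List (Option A), p.length = m ∧ p ++ u ∈ tildeLang Λ a1 := by
  obtain ⟨w, hw, s, t, hw'⟩ := hu
  obtain ⟨p, rfl, hpw⟩ := hw.exists_append_left m
  set q := xiB a1 p ++ s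
  have hq : p.length ≤ q.length := by
    have := length_le_length_xiB a1 p
    simp only [q, List.length_append]; omega
  refine ⟨q.drop (q.length - p.length), by simp; omega, p ++ w, hpw,
    q.take (q.length - p.length), t, ?_⟩
  rw [xiB_append, ← hw']
  simp only [← List.append_assoc, List.take_append_drop, q]

lemma xiB_filterMap_id_of_mem_tildeLang {u : List (Option A)} (hu : u ∈ tildeLang Λ a1)
    (hhead : u.head? ≠ some (some a1)) (hlast : u.getLast? ≠ some none) :
    xiB a1 (u.filterMap id) = u :=
  let ⟨w, _, huw⟩ := hu
  (xiB_filterMap_id_of_isChain a1 u ((isChain_xiB a1 w).infix huw) hlast).1 hhead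

lemma lSync_of_lSyncL_xiB {l : ℕ} {μ : List A} (hμ : LSyncL (tildeLang Λ a1) (2 * l) (xiB a1 μ)) :
    LSync Λ l μ := by
  refine ⟨filterMap_id_xiB a1 μ ▸ adm_filterMap_id_of_mem_tildeLang hμ.1, fun ω hμω => ?_⟩
  refine Set.Subset.antisymm ?_ (Gamma_append_subset l μ ω)
  rintro κ ⟨hlen, hκ, hκμ⟩
  refine ⟨hlen, hκ, ?_⟩
  obtain ⟨p, hp, hpκμ⟩ := exists_append_left_mem_tildeLang (xiB_mem_tildeLang (a1 := a1) hκμ)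
    (2 * l - (xiB a1 κ).length)
  have hpad : p ++ xiB a1 κ ∈ GammaL (tildeLang Λ a1) (2 * l) (xiB a1 μ) := by
    refine ⟨?_, mem_tildeLang_of_infix hpκμ ⟨[], xiB a1 μ, by simp⟩, by simpa using hpκμ⟩
    have := length_xiB_le a1 κ
    simp only [List.length_append]; omega
  rw [hμ.2 (xiB a1 ω) (by simpa using xiB_mem_tildeLang (a1 := a1) hμω)] at hpad
  have hadm := adm_filterMap_id_of_mem_tildeLang hpad.2.2
  simp only [List.filterMap_append, filterMap_id_xiB, List.append_assoc] at hadm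
  exact hadm.infix ⟨p.filterMap id, [], by simp⟩

end TildeLang

/-- On words neither beginning with `1` nor ending with `0`, `η^B` is deletion of the `0`s. -/
theorem etaB_lSync_general [DecidableEq A] (Λ : Set (ℤ → A)) (a1 : A) (l : ℕ) (ν : List (Option A))
    (hν : LSyncL (tildeLang Λ a1) (2 * l) ν)
    (hhead : ν.head? ≠ some (some a1)) (hlast : ν.getLast? ≠ some none) :
    LSync Λ l (ν.filterMap id) := by
  have hν' : xiB a1 (ν.filterMap id) = ν := xiB_filterMap_id_of_mem_tildeLang hν.1 hhead hlast
  exact lSync_of_lSyncL_xiB (hν' ▸ hν)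

/-- if `ν` is a `2l`-synchronizing word of the expansion `Λ̃` which
neither begins with the symbol `1` (i.e. `some a1`) nor ends with the symbol `0`
(i.e. `none`), then `η^B(ν)` is an `l`-synchronizing word of `Λ`.  For such words
every `0` is immediately followed by a `1`, so `η^B` (replacing each `01` by `1`)
is just deletion of all `0`s, i.e. `ν.filterMap id`. -/
theorem etaB_lSync [TopologicalSpace A] [DiscreteTopology A] [Finite A] [DecidableEq A]
    (Λ : Set (ℤ → A)) (hΛ : IsSubshift Λ) (a1 : A) (hirr : IrredShift Λ)
    (l : ℕ) (ν : List (Option A))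
    (hν : LSyncL (tildeLang Λ a1) (2 * l) ν)
    (hhead : ν.head? ≠ some (some a1)) (hlast : ν.getLast? ≠ some none) :
    LSync Λ l (ν.filterMap id) :=
  etaB_lSync_general Λ a1 l ν hν hhead hlast
end
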